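/- The dual diamond norm of a qc-map equals the sum of operator norms: for B = {B_1, …, B_n} ⊂ B_h(H) and φ_B^{qc}: X ↦ Σ_i Tr[X B_i] |e_i⟩⟨e_i| from B(H) to B(ℂⁿ), one has ‖φ_B^{qc}‖^⋄ = Σ_i ‖B_i‖. -/

import Mathlib

open scoped Matrix Kronecker ComplexOrder Matrix.Norms.L2Operator

noncomputable section

/-- Square complex matrices indexed by `ι`. -/
abbrev Mat (ι : Type) [Fintype ι] [DecidableEq ι] : Type := Matrix ι ι ℂ

/-- Linear maps between matrix algebras. -/
abbrev MatMap (ι κ : Type) [Fintype ι] [DecidableEq ι] [Fintype κ] [DecidableEq κ] : Type :=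
  Mat ι →ₗ[ℂ] Mat κ

variable {ι κ μ ν : Type} [Fintype ι] [DecidableEq ι] [Fintype κ] [DecidableEq κ]
  [Fintype μ] [DecidableEq μ] [Fintype ν] [DecidableEq ν]

/-- `φ ⊗ id_τ`, the amplification of `φ` with the identity on `Mat τ`. -/
def tensorId (φ : MatMap ι κ) (τ : Type) [Fintype τ] [DecidableEq τ] :
    Matrix (ι × τ) (ι × τ) ℂ →ₗ[ℂ] Matrix (κ × τ) (κ × τ) ℂ where
  toFun X := Matrix.of fun p q => φ (Matrix.of fun i j => X (i, p.2) (j, q.2)) p.1 q.1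
  map_add' X Y := by
    funext p q
    show φ (Matrix.of fun i j => (X + Y) (i, p.2) (j, q.2)) p.1 q.1 = _
    rw [show (Matrix.of fun i j => (X + Y) (i, p.2) (j, q.2))
        = (Matrix.of fun i j => X (i, p.2) (j, q.2))
          + (Matrix.of fun i j => Y (i, p.2) (j, q.2)) from rfl, map_add]
    rfl
  map_smul' c X := by
    funext p q
    show φ (Matrix.of fun i j => (c • X) (i, p.2) (j, q.2)) p.1 q.1 = _
    rw [show (Matrix.of fun i j => (c • X) (i, p.2) (j, q.2))
        = c • (Matrix.of fun i j => X (i, p.2) (j, q.2)) from rfl, map_smul]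
    rfl

/-- `φ` is Hermitian-preserving. -/
def IsHermitianPreserving (φ : MatMap ι κ) : Prop := ∀ X, (φ X)ᴴ = φ Xᴴ

/-- `φ` is completely positive: all amplifications by finite-dimensional identities
preserve positive semidefiniteness. -/
def IsCP (φ : MatMap ι κ) : Prop :=
  ∀ (l : ℕ) (X : Matrix (ι × Fin l) (ι × Fin l) ℂ), X.PosSemidef →
    (tensorId φ (Fin l) X).PosSemidef

/-- `φ` is trace-preserving. -/
def IsTP (φ : MatMap ι κ) : Prop := ∀ X, (φ X).trace = X.trace

/-- A channel is a completely positive trace-preserving map. -/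
def IsChannel (φ : MatMap ι κ) : Prop := IsCP φ ∧ IsTP φ

/-- Density operator. -/
def IsState (σ : Mat ι) : Prop := σ.PosSemidef ∧ σ.trace = 1

/-- The Choi matrix of `φ`. -/
def choiMatrix (φ : MatMap ι κ) : Matrix (κ × ι) (κ × ι) ℂ :=
  Matrix.of fun p q => φ (Matrix.single p.2 q.2 1) p.1 q.1

/-- The tracelike functional `s`. -/
def sFun (φ : MatMap ι ι) : ℂ :=
  ∑ i, ∑ j, φ (Matrix.single i j 1) i j

/-- The pairing `⟨ψ, φ⟩ = s(ψ ∘ φ)`. -/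
def pairing (ψ : MatMap κ ι) (φ : MatMap ι κ) : ℂ := sFun (ψ ∘ₗ φ)

/-- The erasure map `A ↦ Tr[A] σ`. -/
def erasure (σ : Mat κ) : MatMap ι κ :=
  (Matrix.traceLinearMap ι ℂ ℂ).smulRight σ

/-- The diamond norm, via its order-theoretic characterization. -/
noncomputable def diamondNorm (φ : MatMap ι κ) : ℝ :=
  sInf {r : ℝ | 0 < r ∧ ∃ α : MatMap ι κ, IsChannel α ∧
    IsCP ((r : ℂ) • α - φ) ∧ IsCP ((r : ℂ) • α + φ)}

/-- The dual diamond norm, via its order-theoretic characterization. -/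
noncomputable def dualDiamondNorm (ψ : MatMap ι κ) : ℝ :=
  sInf {r : ℝ | 0 < r ∧ ∃ σ : Mat κ, IsState σ ∧
    IsCP ((r : ℂ) • erasure (ι := ι) σ - ψ) ∧ IsCP ((r : ℂ) • erasure (ι := ι) σ + ψ)}

/-- The Hilbert–Schmidt (trace-duality) adjoint of `ψ`. -/
def adjointMap (ψ : MatMap ι κ) : MatMap κ ι where
  toFun A := Matrix.of fun i j => (A * ψ (Matrix.single j i 1)).trace
  map_add' A B := by funext i j; simp [Matrix.add_mul]
  map_smul' c A := by funext i j; simp [Matrix.smul_mul]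

/-- The cq-map associated with a family of operators. -/
def cqMap {n : ℕ} (A : Fin n → Mat ι) : MatMap (Fin n) ι where
  toFun X := ∑ i, X i i • A i
  map_add' X Y := by simp [Matrix.add_apply, add_smul, Finset.sum_add_distrib]
  map_smul' c X := by simp [Matrix.smul_apply, smul_smul, Finset.smul_sum]

/-- The qc-map associated with a family of operators. -/
def qcMap {n : ℕ} (B : Fin n → Mat ι) : MatMap ι (Fin n) where
  toFun X := Matrix.diagonal fun i => (X * B i).trace
  map_add' X Y := by
    funext i j
    by_cases h : i = j <;>
      simp [Matrix.add_mul, Matrix.diagonal, Matrix.of_apply, h]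
  map_smul' c X := by
    funext i j
    by_cases h : i = j <;>
      simp [Matrix.smul_mul, Matrix.diagonal, Matrix.of_apply, h]

/-- A POVM with `n` outcomes. -/
def IsPOVM {n : ℕ} (M : Fin n → Mat ι) : Prop :=
  (∀ i, (M i).PosSemidef) ∧ ∑ i, M i = 1

/-- An ensemble: probabilities with states. -/
def IsEnsemble {n : ℕ} (lam : Fin n → ℝ) (σ : Fin n → Mat ι) : Prop :=
  (∀ i, 0 < lam i) ∧ (∑ i, lam i = 1) ∧ ∀ i, IsState (σ i)

/-- Optimal success probability of guessing among the states of an ensemble. -/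
noncomputable def pSucc {n : ℕ} (lam : Fin n → ℝ) (σ : Fin n → Mat ι) : ℝ :=
  sSup {r : ℝ | ∃ M : Fin n → Mat ι, IsPOVM M ∧
    r = ∑ i, lam i * ((M i * σ i).trace).re}

/-- Trace norm `‖A‖₁ = Tr √(AᴴA)`. -/
noncomputable def traceNorm (A : Mat ι) : ℝ :=
  (((Matrix.posSemidef_conjTranspose_mul_self A).1.eigenvectorUnitary : Mat ι) *
    Matrix.diagonal (((↑) : ℝ → ℂ) ∘ Real.sqrt ∘ (Matrix.posSemidef_conjTranspose_mul_self A).1.eigenvalues) *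
    (star (Matrix.posSemidef_conjTranspose_mul_self A).1.eigenvectorUnitary : Mat ι)).trace.re

/-- Le Cam deficiency of `Φ` with respect to `Ψ`. -/
noncomputable def deficiency (Φ : MatMap ι κ) (Ψ : MatMap ι μ) : ℝ :=
  sInf {r : ℝ | ∃ α : MatMap μ κ, IsChannel α ∧ r = diamondNorm (Φ - α ∘ₗ Ψ)}

/-!
Upper bound: for `r > ∑ ‖Bᵢ‖` take the diagonal state `σ` with `r σᵢᵢ = ‖Bᵢ‖ + δ`. Then
`r Tr[·] σ ± φ_B^{qc}` is the qc-map of the family `(r σᵢᵢ) 1 ± Bᵢ`, which is positive since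
`‖Bᵢ‖ ≤ r σᵢᵢ`, and a qc-map of a positive family is completely positive: it is a sum of maps
`X ↦ Tr[X C] P` with `C, P ≥ 0`, and these are sums of conjugations `X ↦ K X Kᴴ`.

Lower bound: evaluating the positive maps `r Tr[·] σ ± φ_B^{qc}` at the projection onto an
eigenvector of `Bᵢ` whose eigenvalue has modulus `‖Bᵢ‖`, the `i`-th diagonal entries give
`‖Bᵢ‖ ≤ r σᵢᵢ`; summing over `i` gives `∑ ‖Bᵢ‖ ≤ r`.
-/

open Matrix

@[simp]
lemma qcMap_apply {n : ℕ} (B : Fin n → Mat ι) (X : Mat ι) :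
    qcMap B X = diagonal fun i => (X * B i).trace := rfl

@[simp]
lemma erasure_apply (σ : Mat κ) (X : Mat ι) : erasure σ X = X.trace • σ := rfl

def conjMap (K : Matrix κ ι ℂ) : MatMap ι κ where
  toFun X := K * X * Kᴴ
  map_add' X Y := by simp only [Matrix.mul_add, Matrix.add_mul]
  map_smul' c X := by simp only [Matrix.mul_smul, Matrix.smul_mul, RingHom.id_apply]

lemma tensorId_conjMap (K : Matrix κ ι ℂ) (τ : Type) [Fintype τ] [DecidableEq τ]
    (X : Matrix (ι × τ) (ι × τ) ℂ) :
    tensorId (conjMap K) τ X = (K ⊗ₖ (1 : Matrix τ τ ℂ)) * X * (K ⊗ₖ (1 : Matrix τ τ ℂ))ᴴ := by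
  ext ⟨a, p⟩ ⟨b, q⟩
  simp [tensorId, conjMap, Matrix.mul_apply, Fintype.sum_prod_type, Matrix.one_apply,
    Matrix.kroneckerMap_apply, apply_ite (starRingEnd ℂ), mul_ite]

lemma isCP_conjMap (K : Matrix κ ι ℂ) : IsCP (conjMap K) := fun l X hX => by
  rw [tensorId_conjMap]
  exact hX.mul_mul_conjTranspose_same _

lemma IsCP.add {φ ψ : MatMap ι κ} (hφ : IsCP φ) (hψ : IsCP ψ) : IsCP (φ + ψ) :=
  fun l X hX => (hφ l X hX).add (hψ l X hX)

lemma isCP_zero : IsCP (0 : MatMap ι κ) := fun _ _ _ => PosSemidef.zero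

lemma isCP_sum {α : Type} (s : Finset α) {φ : α → MatMap ι κ} (h : ∀ a ∈ s, IsCP (φ a)) :
    IsCP (∑ a ∈ s, φ a) :=
  Finset.sum_induction φ IsCP (fun _ _ => IsCP.add) isCP_zero h

lemma IsCP.posSemidef_apply {φ : MatMap ι κ} (hφ : IsCP φ) {X : Mat ι} (hX : X.PosSemidef) :
    (φ X).PosSemidef :=
  (hφ 1 _ (hX.submatrix Prod.fst)).submatrix fun i : κ => (i, (0 : Fin 1))

def traceSmulMap (C : Mat ι) (P : Mat κ) : MatMap ι κ :=
  ((traceLinearMap ι ℂ ℂ) ∘ₗ LinearMap.mulRight ℂ C).smulRight P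

@[simp]
lemma traceSmulMap_apply (C : Mat ι) (P : Mat κ) (X : Mat ι) :
    traceSmulMap C P X = (X * C).trace • P := rfl

lemma traceSmulMap_vecMulVec (v : ι → ℂ) (w : κ → ℂ) :
    traceSmulMap (vecMulVec v (star v)) (vecMulVec w (star w)) =
      conjMap (vecMulVec w (star v)) := by
  ext X : 1
  rw [traceSmulMap_apply, conjMap, LinearMap.coe_mk, AddHom.coe_mk, conjTranspose_vecMulVec,
    star_star, vecMulVec_mul, vecMulVec_mul_vecMulVec, mul_vecMulVec, trace_vecMulVec,
    ← dotProduct_mulVec, dotProduct_comm]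
  ext a b
  simp only [Matrix.smul_apply, vecMulVec_apply, Pi.smul_apply, smul_eq_mul]
  ring

lemma traceSmulMap_sum_left {α : Type} (s : Finset α) (C : α → Mat ι) (P : Mat κ) :
    traceSmulMap (∑ a ∈ s, C a) P = ∑ a ∈ s, traceSmulMap (C a) P := by
  ext X : 1
  simp [Matrix.mul_sum, trace_sum, Finset.sum_smul]

lemma traceSmulMap_sum_right {α : Type} (s : Finset α) (C : Mat ι) (P : α → Mat κ) :
    traceSmulMap C (∑ a ∈ s, P a) = ∑ a ∈ s, traceSmulMap C (P a) := by
  ext X : 1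
  simp [Finset.smul_sum]

lemma isCP_traceSmulMap {C : Mat ι} {P : Mat κ} (hC : C.PosSemidef) (hP : P.PosSemidef) :
    IsCP (traceSmulMap C P) := by
  obtain ⟨m, v, rfl⟩ := posSemidef_iff_eq_sum_vecMulVec.1 hC
  obtain ⟨m', w, rfl⟩ := posSemidef_iff_eq_sum_vecMulVec.1 hP
  simp only [traceSmulMap_sum_left, traceSmulMap_sum_right, traceSmulMap_vecMulVec]
  exact isCP_sum _ fun _ _ => isCP_sum _ fun _ _ => isCP_conjMap _

lemma qcMap_eq_sum_traceSmulMap {n : ℕ} (C : Fin n → Mat ι) :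
    qcMap C = ∑ i, traceSmulMap (C i) (single i i 1) := by
  ext X : 1
  simp [← sum_single_eq_diagonal, smul_single]

lemma isCP_qcMap {n : ℕ} {C : Fin n → Mat ι} (hC : ∀ i, (C i).PosSemidef) : IsCP (qcMap C) := by
  rw [qcMap_eq_sum_traceSmulMap]
  refine isCP_sum _ fun i _ => isCP_traceSmulMap (hC i) ?_
  rw [← diagonal_single]
  exact PosSemidef.diagonal (Pi.single_nonneg.2 zero_le_one)

lemma qcMap_neg {n : ℕ} (B : Fin n → Mat ι) : qcMap (-B) = -qcMap B := by
  ext X i j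
  by_cases h : i = j <;> simp [h]

lemma smul_erasure_diagonal_add_qcMap {n : ℕ} (r : ℂ) (d : Fin n → ℂ) (B : Fin n → Mat ι) :
    r • erasure (ι := ι) (diagonal d) + qcMap B = qcMap fun i => (r * d i) • 1 + B i := by
  ext X i j
  by_cases h : i = j
  · subst h
    simp [Matrix.mul_add, mul_assoc, mul_comm]
  · simp [h]

lemma smul_erasure_add_qcMap_apply_self {n : ℕ} (r : ℂ) (σ : Mat (Fin n)) (B : Fin n → Mat ι)
    (X : Mat ι) (i : Fin n) :
    (r • erasure (ι := ι) σ + qcMap B) X i i = r * X.trace * σ i i + (X * B i).trace := by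
  simp [mul_assoc]

open scoped MatrixOrder in
lemma posSemidef_smul_one_add_of_norm_le {B : Mat ι} (hB : B.IsHermitian) {c : ℝ} (hc : ‖B‖ ≤ c) :
    ((c : ℂ) • (1 : Mat ι) + B).PosSemidef := by
  have hnorm := IsSelfAdjoint.neg_algebraMap_norm_le_self (a := B) hB
  rw [Matrix.le_iff, sub_neg_eq_add, Algebra.algebraMap_eq_smul_one] at hnorm
  have hgap : (((c - ‖B‖ : ℝ) : ℂ) • (1 : Mat ι)).PosSemidef :=
    PosSemidef.one.smul (by exact_mod_cast sub_nonneg.2 hc)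
  convert hgap.add hnorm using 1
  rw [← Complex.coe_smul, Complex.ofReal_sub, sub_smul]
  abel

lemma isState_diagonal {d : κ → ℝ} (hd : ∀ i, 0 ≤ d i) (hsum : ∑ i, d i = 1) :
    IsState (diagonal fun i => (d i : ℂ)) :=
  ⟨PosSemidef.diagonal fun i => Complex.zero_le_real.2 (hd i),
    by simp [trace_diagonal, ← Complex.ofReal_sum, hsum]⟩

lemma not_isState_of_isEmpty [IsEmpty κ] (σ : Mat κ) : ¬ IsState σ := fun h => by
  simpa [trace] using h.2

lemma Matrix.IsHermitian.exists_isState_trace_mul_eq_eigenvalue {B : Mat ι} (hB : B.IsHermitian)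
    (j : ι) : ∃ X : Mat ι, IsState X ∧ (X * B).trace = hB.eigenvalues j := by
  set v : ι → ℂ := ⇑(hB.eigenvectorBasis j)
  have hv : v ⬝ᵥ star v = 1 := by
    rw [← EuclideanSpace.inner_eq_star_dotProduct, inner_self_eq_norm_sq_to_K,
      hB.eigenvectorBasis.orthonormal.1 j]
    simp
  refine ⟨vecMulVec v (star v), ⟨posSemidef_vecMulVec_self_star v, by rw [trace_vecMulVec, hv]⟩, ?_⟩
  rw [trace_mul_comm, mul_vecMulVec, hB.mulVec_eigenvectorBasis, trace_vecMulVec,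
    smul_dotProduct, hv, Complex.real_smul, mul_one]

lemma Matrix.IsHermitian.exists_abs_eigenvalue_eq_norm [Nonempty ι] {B : Mat ι}
    (hB : B.IsHermitian) : ∃ j, |hB.eigenvalues j| = ‖B‖ := by
  rcases CStarAlgebra.norm_or_neg_norm_mem_spectrum (a := B) hB with h | h <;>
    rw [hB.spectrum_real_eq_range_eigenvalues] at h <;> obtain ⟨j, hj⟩ := h <;>
    exact ⟨j, by simp [hj]⟩

lemma isCP_smul_erasure_add_qcMap {n : ℕ} {B : Fin n → Mat ι} (hB : ∀ i, (B i).IsHermitian)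
    {r : ℝ} {d : Fin n → ℝ} (hd : ∀ i, ‖B i‖ ≤ r * d i) :
    IsCP ((r : ℂ) • erasure (ι := ι) (diagonal fun i => (d i : ℂ)) + qcMap B) := by
  rw [smul_erasure_diagonal_add_qcMap]
  refine isCP_qcMap fun i => ?_
  rw [← Complex.ofReal_mul]
  exact posSemidef_smul_one_add_of_norm_le (hB i) (hd i)

lemma neg_re_trace_mul_le_of_isCP {n : ℕ} {B : Fin n → Mat ι} {r : ℝ} {σ : Mat (Fin n)}
    (h : IsCP ((r : ℂ) • erasure (ι := ι) σ + qcMap B)) {X : Mat ι} (hX : IsState X)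
    (i : Fin n) : -(X * B i).trace.re ≤ r * (σ i i).re := by
  have h₀ := (h.posSemidef_apply hX.1).diag_nonneg (i := i)
  rw [smul_erasure_add_qcMap_apply_self, hX.2, mul_one] at h₀
  have := (Complex.le_def.1 h₀).1
  simp only [Complex.zero_re, Complex.add_re, Complex.mul_re, Complex.ofReal_re,
    Complex.ofReal_im, zero_mul, sub_zero] at this
  linarith

lemma norm_le_of_isCP_smul_erasure_sub_add [Nonempty ι] {n : ℕ} {B : Fin n → Mat ι}
    (hB : ∀ i, (B i).IsHermitian) {r : ℝ} {σ : Mat (Fin n)}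
    (hm : IsCP ((r : ℂ) • erasure (ι := ι) σ - qcMap B))
    (hp : IsCP ((r : ℂ) • erasure (ι := ι) σ + qcMap B)) (i : Fin n) :
    ‖B i‖ ≤ r * (σ i i).re := by
  obtain ⟨j, hj⟩ := (hB i).exists_abs_eigenvalue_eq_norm
  obtain ⟨X, hX, hXB⟩ := (hB i).exists_isState_trace_mul_eq_eigenvalue j
  rw [sub_eq_add_neg, ← qcMap_neg] at hm
  have h₁ := neg_re_trace_mul_le_of_isCP hp hX i
  have h₂ := neg_re_trace_mul_le_of_isCP hm hX i
  simp only [Pi.neg_apply, Matrix.mul_neg, trace_neg, Complex.neg_re, neg_neg, hXB,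
    Complex.ofReal_re] at h₁ h₂
  rw [← hj]
  exact abs_le.2 ⟨by linarith, by linarith⟩

def IsDualDiamondBound (ψ : MatMap ι κ) (r : ℝ) : Prop :=
  0 < r ∧ ∃ σ : Mat κ, IsState σ ∧
    IsCP ((r : ℂ) • erasure (ι := ι) σ - ψ) ∧ IsCP ((r : ℂ) • erasure (ι := ι) σ + ψ)

lemma dualDiamondNorm_eq_sInf (ψ : MatMap ι κ) :
    dualDiamondNorm ψ = sInf {r | IsDualDiamondBound ψ r} := rfl

lemma dualDiamondNorm_of_isEmpty [IsEmpty κ] (ψ : MatMap ι κ) : dualDiamondNorm ψ = 0 := by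
  have h : {r | IsDualDiamondBound ψ r} = ∅ :=
    Set.eq_empty_of_forall_notMem fun _ ⟨_, σ, hσ, _⟩ => not_isState_of_isEmpty σ hσ
  rw [dualDiamondNorm_eq_sInf, h, Real.sInf_empty]

lemma IsDualDiamondBound.sum_norm_le {n : ℕ} {B : Fin n → Mat ι} (hB : ∀ i, (B i).IsHermitian)
    {r : ℝ} (h : IsDualDiamondBound (qcMap B) r) : ∑ i, ‖B i‖ ≤ r := by
  obtain ⟨hr, σ, hσ, hm, hp⟩ := h
  rcases isEmpty_or_nonempty ι with hι | hι
  · simpa [Subsingleton.elim (B _) 0] using hr.le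
  have htr : ∑ i, (σ i i).re = 1 := by simpa [trace] using congrArg Complex.re hσ.2
  calc ∑ i, ‖B i‖ ≤ ∑ i, r * (σ i i).re :=
        Finset.sum_le_sum fun i _ => norm_le_of_isCP_smul_erasure_sub_add hB hm hp i
    _ = r := by rw [← Finset.mul_sum, htr, mul_one]

lemma isDualDiamondBound_qcMap_of_lt {n : ℕ} (hn : 0 < n) {B : Fin n → Mat ι}
    (hB : ∀ i, (B i).IsHermitian) {r : ℝ} (hr : ∑ i, ‖B i‖ < r) :
    IsDualDiamondBound (qcMap B) r := by
  set δ := (r - ∑ i, ‖B i‖) / n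
  have hδ : 0 < δ := div_pos (sub_pos.2 hr) (by exact_mod_cast hn)
  have hr₀ : 0 < r := (Finset.sum_nonneg fun i _ => norm_nonneg (B i)).trans_lt hr
  set d : Fin n → ℝ := fun i => (‖B i‖ + δ) / r
  have hd : ∀ i, ‖B i‖ ≤ r * d i := fun i => by
    simp only [d, mul_div_cancel₀ _ hr₀.ne']
    linarith
  have hsum : ∑ i, d i = 1 := by
    simp only [d, ← Finset.sum_div, Finset.sum_add_distrib, Finset.sum_const, Finset.card_univ,
      Fintype.card_fin, nsmul_eq_mul, δ]
    field_simp
    ring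
  refine ⟨hr₀, _, isState_diagonal (fun i => by positivity) hsum, ?_,
    isCP_smul_erasure_add_qcMap hB hd⟩
  rw [sub_eq_add_neg, ← qcMap_neg]
  exact isCP_smul_erasure_add_qcMap (fun i => (hB i).neg) (by simpa using hd)

theorem dualDiamondNorm_qcMap {n k : ℕ} (B : Fin n → Mat (Fin k))
    (hB : ∀ i, (B i).IsHermitian) :
    dualDiamondNorm (qcMap B) = ∑ i, ‖B i‖ := by
  rcases Nat.eq_zero_or_pos n with rfl | hn
  · simp [dualDiamondNorm_of_isEmpty]
  rw [dualDiamondNorm_eq_sInf]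
  refine csInf_eq_of_forall_ge_of_forall_gt_exists_lt
    ⟨_, isDualDiamondBound_qcMap_of_lt hn hB (lt_add_one _)⟩ (fun r hr => hr.sum_norm_le hB)
    fun w hw => ⟨_, isDualDiamondBound_qcMap_of_lt hn hB (left_lt_add_div_two.2 hw),
      add_div_two_lt_right.2 hw⟩
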